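/- arXiv:1810.01614 — 12 statements merged into one kernel-verified Lean document; each statement's English description precedes it below -/
import Mathlib

section
/- Let w, v be vectors in ℝ^m with distinct indices i ≠ j such that all entries of w except possibly the i-th are nonnegative, all entries of v except possibly the j-th are nonnegative, and w_i + v_i < 0 and w_j + v_j < 0. Then there exist vectors ŵ, v̂ in the conic hull of {w, v} (i.e., ŵ = λ₁ w + λ₃ v and v̂ = λ₂ w + λ₄ v for nonnegative scalars λ₁, λ₂, λ₃, λ₄) such that ŵ + v̂ = w + v, ŵ_j = 0, and v̂_i = 0. -/
theorem stmt_0 (m : ℕ) (w v : Fin m → ℝ) (i j : Fin m) (hij : i ≠ j)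
    (hw : ∀ k, k ≠ i → 0 ≤ w k) (hv : ∀ k, k ≠ j → 0 ≤ v k)
    (hi : w i + v i < 0) (hj : w j + v j < 0) :
    ∃ l1 l2 l3 l4 : ℝ, 0 ≤ l1 ∧ 0 ≤ l2 ∧ 0 ≤ l3 ∧ 0 ≤ l4 ∧
      (l1 • w + l3 • v) + (l2 • w + l4 • v) = w + v ∧
      (l1 • w + l3 • v) j = 0 ∧ (l2 • w + l4 • v) i = 0 := by
  have hvi : 0 ≤ v i := hv i hij
  have hwj : 0 ≤ w j := hw j (Ne.symm hij)
  have hwi : w i < 0 := by linarith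
  have hvj : v j < 0 := by linarith
  have hΔ : 0 < w i * v j - v i * w j := by
    nlinarith [mul_pos (neg_pos.2 hvj) (neg_pos.2 hi), mul_nonneg hvi (le_of_lt (neg_pos.2 hj))]
  set Δ := w i * v j - v i * w j with hΔdef
  have hΔne : Δ ≠ 0 := ne_of_gt hΔ
  refine ⟨(w i + v i) * v j / Δ, -(v i * (w j + v j)) / Δ,
    -((w i + v i) * w j) / Δ, w i * (w j + v j) / Δ, ?_, ?_, ?_, ?_, ?_, ?_, ?_⟩
  · apply div_nonneg _ (le_of_lt hΔ); nlinarith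
  · apply div_nonneg _ (le_of_lt hΔ); nlinarith
  · apply div_nonneg _ (le_of_lt hΔ); nlinarith
  · apply div_nonneg _ (le_of_lt hΔ); nlinarith
  · funext k
    simp only [Pi.add_apply, Pi.smul_apply, smul_eq_mul]
    field_simp
    ring
  · simp only [Pi.add_apply, Pi.smul_apply, smul_eq_mul]
    field_simp
    ring
  · simp only [Pi.add_apply, Pi.smul_apply, smul_eq_mul]
    field_simp
    ring
end

section
/- Let K ⊆ ℝ^m be a convex cone containing the nonnegative orthant ℝ^m_+. For each i ∈ {1,...,m}, define C_i = { c ∈ K : c_j ≥ 0 for all j ≠ i }, and let C = C_1 + ⋯ + C_m (Minkowski sum). Then a vector c with at least one strictly negative entry belongs to C if and only if c belongs to the Minkowski sum of only those cones C_i with c_i < 0. -/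
private lemma stmt_1_aux (m : ℕ) (K : Set (Fin m → ℝ))
    (hadd : ∀ x ∈ K, ∀ y ∈ K, x + y ∈ K)
    (hsmul : ∀ x ∈ K, ∀ t : ℝ, 0 ≤ t → t • x ∈ K)
    (horthant : ∀ x : Fin m → ℝ, (∀ i, 0 ≤ x i) → x ∈ K)
    (c : Fin m → ℝ) (hneg : ∃ i, c i < 0) :
    ∀ n : ℕ, ∀ f : Fin m → (Fin m → ℝ),
      (Finset.univ.filter (fun i => 0 ≤ c i ∧ f i ≠ 0)).card ≤ n →
      (∀ i, f i ∈ K ∧ ∀ j, j ≠ i → 0 ≤ f i j) → c = ∑ i, f i →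
      ∃ g : Fin m → (Fin m → ℝ), (∀ i, g i ∈ K ∧ ∀ j, j ≠ i → 0 ≤ g i j) ∧
        (∀ i, 0 ≤ c i → g i = 0) ∧ c = ∑ i, g i := by
  classical
  intro n
  induction n with
  | zero =>
    intro f hcard hf hsum
    refine ⟨f, hf, ?_, hsum⟩
    intro i hci
    by_contra hfi
    have : i ∈ Finset.univ.filter (fun i => 0 ≤ c i ∧ f i ≠ 0) := by
      simp [hci, hfi]
    have := Finset.card_pos.mpr ⟨i, this⟩
    omega
  | succ n ih =>
    intro f hcard hf hsum
    by_cases hS : (Finset.univ.filter (fun i => 0 ≤ c i ∧ f i ≠ 0)).card = 0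
    · exact ih f (by omega) hf hsum
    · obtain ⟨i, hi⟩ := Finset.card_pos.mp (Nat.pos_of_ne_zero hS)
      simp only [Finset.mem_filter, Finset.mem_univ, true_and] at hi
      obtain ⟨hci, hfi⟩ := hi
      -- coordinate-wise sum at i
      have hcoord : ∀ j, c j = ∑ k, f k j := by
        intro j
        have := congrFun hsum j
        simpa [Finset.sum_apply] using this
      -- pick the redistribution weights
      have key : ∃ lam : Fin m → ℝ,
          (∀ k, k ≠ i → 0 ≤ lam k) ∧
          (∑ k ∈ Finset.univ.erase i, lam k = 1) ∧
          (∀ k, k ≠ i → 0 ≤ f k i + lam k * f i i) ∧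
          (∀ k, k ≠ i → 0 ≤ c k → f k = 0 → lam k = 0) := by
        by_cases hfii : 0 ≤ f i i
        · obtain ⟨i₀, hi₀⟩ := hneg
          have hne : i₀ ≠ i := by
            intro h; rw [h] at hi₀; linarith
          refine ⟨fun k => if k = i₀ then 1 else 0, ?_, ?_, ?_, ?_⟩
          · intro k _; dsimp only; split <;> norm_num
          · rw [Finset.sum_ite_eq' (Finset.univ.erase i) i₀]
            simp [hne]
          · intro k hk
            have h1 := (hf k).2 i (Ne.symm hk)
            dsimp only; split <;> nlinarith
          · intro k _ hck hfk
            dsimp only; split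
            · next h => subst h; linarith
            · rfl
        · push_neg at hfii
          set S : ℝ := c i - f i i with hSdef
          have hSpos : 0 < S := by
            have : 0 ≤ c i := hci
            simp only [hSdef]; linarith
          have hsumS : ∑ k ∈ Finset.univ.erase i, f k i = S := by
            have h0 := Finset.add_sum_erase Finset.univ (fun k => f k i)
              (Finset.mem_univ i)
            have := hcoord i
            simp only [hSdef]; linarith [h0, this]
          refine ⟨fun k => f k i / S, ?_, ?_, ?_, ?_⟩
          · intro k hk
            exact div_nonneg ((hf k).2 i (Ne.symm hk)) hSpos.le
          · rw [← Finset.sum_div, hsumS, div_self hSpos.ne']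
          · intro k hk
            have h1 : 0 ≤ f k i := (hf k).2 i (Ne.symm hk)
            have hcS : c i = S + f i i := by simp [hSdef]
            have heq : f k i + f k i / S * f i i = f k i * c i / S := by
              rw [hcS]; field_simp
            rw [heq]
            exact div_nonneg (mul_nonneg h1 hci) hSpos.le
          · intro k _ _ hfk
            simp [hfk]
      obtain ⟨lam, hlam0, hlam1, hlami, hlamz⟩ := key
      set g : Fin m → (Fin m → ℝ) :=
        fun k => if k = i then 0 else f k + lam k • f i with hgdef
      have hgK : ∀ k, g k ∈ K ∧ ∀ j, j ≠ k → 0 ≤ g k j := by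
        intro k
        by_cases hk : k = i
        · subst hk
          constructor
          · simp only [hgdef, if_pos rfl]
            exact horthant 0 (fun j => le_refl 0)
          · intro j _; simp [hgdef]
        · constructor
          · simp only [hgdef, if_neg hk]
            exact hadd _ (hf k).1 _ (hsmul _ (hf i).1 _ (hlam0 k hk))
          · intro j hj
            simp only [hgdef, if_neg hk, Pi.add_apply, Pi.smul_apply,
              smul_eq_mul]
            by_cases hji : j = i
            · subst hji; exact hlami k hk
            · have h1 := (hf k).2 j hj
              have h2 := (hf i).2 j hji
              nlinarith [hlam0 k hk]
      have hgsum : c = ∑ k, g k := by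
        have h0 := Finset.add_sum_erase Finset.univ g (Finset.mem_univ i)
        have hgi : g i = 0 := by simp [hgdef]
        have herase : ∑ k ∈ Finset.univ.erase i, g k
            = (∑ k ∈ Finset.univ.erase i, f k) + f i := by
          have : ∀ k ∈ Finset.univ.erase i, g k = f k + lam k • f i := by
            intro k hk
            have : k ≠ i := Finset.ne_of_mem_erase hk
            simp [hgdef, this]
          rw [Finset.sum_congr rfl this, Finset.sum_add_distrib,
            ← Finset.sum_smul, hlam1, one_smul]
        have hf0 := Finset.add_sum_erase Finset.univ f (Finset.mem_univ i)
        calc c = ∑ k, f k := hsum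
          _ = f i + ∑ k ∈ Finset.univ.erase i, f k := hf0.symm
          _ = ∑ k ∈ Finset.univ.erase i, g k := by rw [herase]; abel
          _ = ∑ k, g k := by
              rw [← h0, hgi]; abel
      -- the filter set shrinks
      have hsub : (Finset.univ.filter (fun k => 0 ≤ c k ∧ g k ≠ 0)) ⊆
          (Finset.univ.filter (fun k => 0 ≤ c k ∧ f k ≠ 0)).erase i := by
        intro k hk
        simp only [Finset.mem_filter, Finset.mem_univ, true_and] at hk
        obtain ⟨hck, hgk⟩ := hk
        have hki : k ≠ i := by
          intro h; subst h; simp [hgdef] at hgk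
        rw [Finset.mem_erase]
        refine ⟨hki, ?_⟩
        simp only [Finset.mem_filter, Finset.mem_univ, true_and]
        refine ⟨hck, ?_⟩
        intro hfk
        apply hgk
        simp [hgdef, hki, hfk, hlamz k hki hck hfk]
      have hcard' : (Finset.univ.filter (fun k => 0 ≤ c k ∧ g k ≠ 0)).card ≤ n := by
        have h1 := Finset.card_le_card hsub
        have h2 : ((Finset.univ.filter (fun k => 0 ≤ c k ∧ f k ≠ 0)).erase i).card
            = (Finset.univ.filter (fun k => 0 ≤ c k ∧ f k ≠ 0)).card - 1 := by
          apply Finset.card_erase_of_mem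
          simp [hci, hfi]
        omega
      exact ih g hcard' hgK hgsum

theorem stmt_1 (m : ℕ) (K : Set (Fin m → ℝ))
    (hadd : ∀ x ∈ K, ∀ y ∈ K, x + y ∈ K)
    (hsmul : ∀ x ∈ K, ∀ t : ℝ, 0 ≤ t → t • x ∈ K)
    (horthant : ∀ x : Fin m → ℝ, (∀ i, 0 ≤ x i) → x ∈ K)
    (c : Fin m → ℝ) (hneg : ∃ i, c i < 0) :
    (∃ f : Fin m → (Fin m → ℝ),
        (∀ i, f i ∈ K ∧ ∀ j, j ≠ i → 0 ≤ f i j) ∧ c = ∑ i, f i) ↔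
    (∃ f : Fin m → (Fin m → ℝ),
        (∀ i, f i ∈ K ∧ ∀ j, j ≠ i → 0 ≤ f i j) ∧
        (∀ i, 0 ≤ c i → f i = 0) ∧ c = ∑ i, f i) := by
  constructor
  · rintro ⟨f, hf, hsum⟩
    exact stmt_1_aux m K hadd hsmul horthant c hneg
      (Finset.univ.filter (fun i => 0 ≤ c i ∧ f i ≠ 0)).card f le_rfl hf hsum
  · rintro ⟨f, hf, _, hsum⟩
    exact ⟨f, hf, hsum⟩
end

section
/- Let A be a real n × m matrix with distinct columns a_1,...,a_m and let c ∈ ℝ^m. If the signomial f(x) = Σ_{i=1}^m c_i exp(a_iᵀ x) is nonnegative on all of ℝ^n and a_k is an extreme point of the convex hull of {a_1,...,a_m}, then c_k ≥ 0. -/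
/-!
Since `a k` is an extreme point of the convex hull of the finite set of exponents, a linear
functional `ℓ` separates it strictly from all other exponents. Along the ray `x = t y`, where `y`
represents `ℓ`, the signomial multiplied by `exp (-t ℓ(a k))` tends to `c k` as `t → ∞`, because
every other term decays exponentially; nonnegativity then passes to the limit.
-/

open Filter Topology Real

theorem exists_dual_lt_of_mem_extremePoints_convexHull {E : Type*} [TopologicalSpace E]
    [AddCommGroup E] [Module ℝ E] [IsTopologicalAddGroup E] [ContinuousSMul ℝ E]
    [LocallyConvexSpace ℝ E] [T2Space E] {s : Set E} (hs : s.Finite) {x : E}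
    (hx : x ∈ (convexHull ℝ s).extremePoints ℝ) :
    ∃ f : StrongDual ℝ E, ∀ y ∈ s, y ≠ x → f y < f x := by
  have hx' : x ∉ convexHull ℝ (s \ {x}) := fun h =>
    ((convex_convexHull ℝ s).mem_extremePoints_iff_mem_sdiff_convexHull_sdiff.1 hx).2
      (convexHull_mono (Set.sdiff_subset_sdiff_left (subset_convexHull ℝ s)) h)
  obtain ⟨f, u, hlt, hu⟩ := geometric_hahn_banach_closed_point (convex_convexHull ℝ _)
    (hs.sdiff.isClosed_convexHull ℝ) hx'
  exact ⟨f, fun y hy hyx => (hlt y (subset_convexHull ℝ _ ⟨hy, hyx⟩)).trans hu⟩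

theorem tendsto_sum_mul_exp_mul_sub_atTop {ι : Type*} [Fintype ι]
    (c w : ι → ℝ) {k : ι} (hk : ∀ i ≠ k, w i < w k) :
    Tendsto (fun t => ∑ i, c i * exp (t * (w i - w k))) atTop (𝓝 (c k)) := by
  classical
  have hterm : ∀ i, Tendsto (fun t => c i * exp (t * (w i - w k))) atTop
      (𝓝 (if i = k then c k else 0)) := by
    intro i
    by_cases hik : i = k
    · subst hik
      simp only [sub_self, mul_zero, exp_zero, mul_one, if_true]
      exact tendsto_const_nhds
    · rw [if_neg hik, ← mul_zero (c i)]
      exact (tendsto_exp_atBot.comp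
        (tendsto_id.atTop_mul_const_of_neg (sub_neg.2 (hk i hik)))).const_mul (c i)
  simpa using tendsto_finsetSum Finset.univ fun i _ => hterm i

theorem nonneg_of_forall_sum_mul_exp_mul_nonneg {ι : Type*} [Fintype ι] (c w : ι → ℝ) {k : ι}
    (hk : ∀ i ≠ k, w i < w k) (h : ∀ t, 0 ≤ ∑ i, c i * exp (t * w i)) : 0 ≤ c k := by
  refine ge_of_tendsto' (tendsto_sum_mul_exp_mul_sub_atTop c w hk) fun t => ?_
  have := mul_nonneg (h t) (exp_nonneg (-(t * w k)))
  simpa only [Finset.sum_mul, mul_assoc, ← exp_add, mul_sub, ← sub_eq_add_neg] using this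

theorem stmt_3 (n m : ℕ) (a : Fin m → (Fin n → ℝ)) (ha : Function.Injective a)
    (c : Fin m → ℝ)
    (hf : ∀ x : Fin n → ℝ, 0 ≤ ∑ i, c i * Real.exp (∑ j, a i j * x j))
    (k : Fin m)
    (hk : a k ∈ Set.extremePoints ℝ (convexHull ℝ (Set.range a))) :
    0 ≤ c k := by
  obtain ⟨f, hf_lt⟩ := exists_dual_lt_of_mem_extremePoints_convexHull (Set.finite_range a) hk
  refine nonneg_of_forall_sum_mul_exp_mul_nonneg c (fun i => f (a i))
    (fun i hi => hf_lt _ (Set.mem_range_self i) (ha.ne hi)) fun t => ?_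
  set y : Fin n → ℝ := fun j => f fun l => if j = l then 1 else 0
  have hdot (v : Fin n → ℝ) : f v = ∑ j, v j * y j :=
    LinearMap.pi_apply_eq_sum_univ f.toLinearMap v
  refine (hf fun j => t * y j).trans_eq (Finset.sum_congr rfl fun i _ => ?_)
  rw [hdot (a i), Finset.mul_sum]
  simp only [mul_left_comm _ t]
end

section
/- Let A be an n × m real matrix with columns a_1,...,a_m, let k ∈ {1,...,m}, and let c ∈ ℝ^m satisfy c_j ≥ 0 for all j ≠ k. Suppose there exists ν ∈ ℝ^{m-1}_+ (indexed by j ≠ k) such that Σ_{j≠k} ν_j (a_j − a_k) = 0 and Σ_{j≠k} ν_j ln(ν_j / (e · c_j)) ≤ c_k (with the convention 0 ln(0/x) = 0, and the inequality requiring ν_j = 0 whenever c_j = 0). Then the signomial f(x) = Σ_{i=1}^m c_i exp(a_iᵀ x) is nonnegative on ℝ^n. -/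
lemma key_ineq (c ν s : ℝ) (hc : 0 ≤ c) (hν : 0 ≤ ν) (hz : c = 0 → ν = 0) :
    ν * s - ν * Real.log (ν / (Real.exp 1 * c)) ≤ c * Real.exp s := by
  rcases eq_or_lt_of_le hν with h | h
  · rw [← h]; simp; positivity
  · have hc' : 0 < c := by
      rcases eq_or_lt_of_le hc with h2 | h2
      · exact absurd (hz h2.symm) (ne_of_gt h)
      · exact h2
    have hlog : Real.log (ν / (Real.exp 1 * c)) = Real.log ν - 1 - Real.log c := by
      rw [Real.log_div (ne_of_gt h) (by positivity),
        Real.log_mul (Real.exp_ne_zero 1) (ne_of_gt hc'), Real.log_exp]; ring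
    have hexp : c * Real.exp s = ν * Real.exp (s + Real.log c - Real.log ν) := by
      rw [Real.exp_sub, Real.exp_add, Real.exp_log hc', Real.exp_log h]
      field_simp
    rw [hexp, hlog]
    have h2 := Real.add_one_le_exp (s + Real.log c - Real.log ν)
    nlinarith [h]

theorem stmt_4 (n m : ℕ) (a : Fin m → (Fin n → ℝ)) (k : Fin m) (c : Fin m → ℝ)
    (hc : ∀ j, j ≠ k → 0 ≤ c j)
    (ν : Fin m → ℝ) (hνk : ν k = 0) (hν : ∀ j, 0 ≤ ν j)
    (hker : ∑ j, ν j • (a j - a k) = 0)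
    (hzero : ∀ j, j ≠ k → c j = 0 → ν j = 0)
    (hre : ∑ j ∈ Finset.univ.erase k, ν j * Real.log (ν j / (Real.exp 1 * c j)) ≤ c k) :
    ∀ x : Fin n → ℝ, 0 ≤ ∑ i, c i * Real.exp (∑ j, a i j * x j) := by
  intro x
  set t : Fin m → ℝ := fun i => ∑ j, a i j * x j with ht
  have hker' : ∀ i, ∑ j, ν j * (a j i - a k i) = 0 := by
    intro i
    have := congrFun hker i
    simpa [Finset.sum_apply] using this
  have hlin : ∑ j, ν j * (t j - t k) = 0 := by
    have h1 : ∑ j, ν j * (t j - t k)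
        = ∑ j, ∑ i, ν j * (a j i - a k i) * x i := by
      refine Finset.sum_congr rfl fun j _ => ?_
      rw [ht]
      simp only
      rw [← Finset.sum_sub_distrib, Finset.mul_sum]
      refine Finset.sum_congr rfl fun i _ => by ring
    rw [h1, Finset.sum_comm]
    have h2 : ∀ i, ∑ j, ν j * (a j i - a k i) * x i
        = (∑ j, ν j * (a j i - a k i)) * x i := by
      intro i; rw [Finset.sum_mul]
    simp only [h2, hker', zero_mul, Finset.sum_const_zero]
  have hlin' : ∑ j ∈ Finset.univ.erase k, ν j * (t j - t k) = 0 := by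
    have := Finset.add_sum_erase Finset.univ (fun j => ν j * (t j - t k))
      (Finset.mem_univ k)
    rw [← this] at hlin
    simpa [hνk] using hlin
  have hstep : ∑ j ∈ Finset.univ.erase k, (ν j * (t j - t k)
      - ν j * Real.log (ν j / (Real.exp 1 * c j)))
      ≤ ∑ j ∈ Finset.univ.erase k, c j * Real.exp (t j - t k) := by
    refine Finset.sum_le_sum fun j hj => ?_
    have hjk := Finset.ne_of_mem_erase hj
    exact key_ineq (c j) (ν j) (t j - t k) (hc j hjk) (hν j) (hzero j hjk)
  rw [Finset.sum_sub_distrib, hlin'] at hstep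
  have hkey : -(c k) ≤ ∑ j ∈ Finset.univ.erase k, c j * Real.exp (t j - t k) := by
    linarith
  have hfinal : ∑ i, c i * Real.exp (t i)
      = Real.exp (t k) * (c k + ∑ j ∈ Finset.univ.erase k, c j * Real.exp (t j - t k)) := by
    rw [← Finset.add_sum_erase Finset.univ (fun i => c i * Real.exp (t i))
      (Finset.mem_univ k), mul_add, Finset.mul_sum]
    congr 1
    · ring
    refine Finset.sum_congr rfl fun j _ => ?_
    rw [Real.exp_sub]
    have := Real.exp_pos (t k)
    field_simp
  calc (0:ℝ) ≤ Real.exp (t k) * (c k + ∑ j ∈ Finset.univ.erase k, c j * Real.exp (t j - t k)) := by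
        apply mul_nonneg (Real.exp_pos _).le
        linarith
    _ = ∑ i, c i * Real.exp (t i) := hfinal.symm
end

section
/- Let K be a closed convex cone in ℝ^n and let a belong to the dual cone K† = { y : yᵀx ≥ 0 for all x ∈ K }. If the set X = { x ∈ K : aᵀx = 1 } is nonempty, then the closure of the conic hull of X equals K. -/
theorem stmt_6 (n : ℕ) (K : Set (Fin n → ℝ))
    (hclosed : IsClosed K) (hconv : Convex ℝ K)
    (hcone : ∀ x ∈ K, ∀ t : ℝ, 0 ≤ t → t • x ∈ K)
    (a : Fin n → ℝ) (ha : ∀ x ∈ K, 0 ≤ ∑ i, a i * x i)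
    (X : Set (Fin n → ℝ)) (hX : X = {x | x ∈ K ∧ ∑ i, a i * x i = 1})
    (hne : X.Nonempty) :
    closure {y | ∃ t : ℝ, 0 ≤ t ∧ ∃ x ∈ convexHull ℝ X, y = t • x} = K := by
  set S := {y | ∃ t : ℝ, 0 ≤ t ∧ ∃ x ∈ convexHull ℝ X, y = t • x} with hS
  have hXK : X ⊆ K := by
    intro x hx; rw [hX] at hx; exact hx.1
  have hhull : convexHull ℝ X ⊆ K := convexHull_min hXK hconv
  have hSK : S ⊆ K := by
    rintro y ⟨t, ht, x, hx, rfl⟩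
    exact hcone x (hhull hx) t ht
  have hadd : ∀ x ∈ K, ∀ y ∈ K, x + y ∈ K := by
    intro x hx y hy
    have h1 : (1/2 : ℝ) • x + (1/2 : ℝ) • y ∈ K :=
      hconv hx hy (by norm_num) (by norm_num) (by norm_num)
    have h2 := hcone _ h1 2 (by norm_num)
    have : (2 : ℝ) • ((1/2 : ℝ) • x + (1/2 : ℝ) • y) = x + y := by
      rw [smul_add, smul_smul, smul_smul]; norm_num
    rwa [this] at h2
  obtain ⟨x₀, hx₀⟩ := hne
  have hx₀' := hx₀
  rw [hX] at hx₀'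
  obtain ⟨hx₀K, hx₀a⟩ := hx₀'
  apply Set.Subset.antisymm
  · exact closure_minimal hSK hclosed
  · intro x hx
    have key : ∀ ε : ℝ, 0 < ε → x + ε • x₀ ∈ S := by
      intro ε hε
      have hεx₀ : ε • x₀ ∈ K := hcone x₀ hx₀K ε hε.le
      have hmem : x + ε • x₀ ∈ K := hadd x hx _ hεx₀
      have hval : ∑ i, a i * (x + ε • x₀) i = (∑ i, a i * x i) + ε := by
        have : ∑ i, a i * (x + ε • x₀) i
            = ∑ i, (a i * x i + ε * (a i * x₀ i)) := by
          apply Finset.sum_congr rfl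
          intro i _
          simp [Pi.add_apply, Pi.smul_apply, smul_eq_mul]
          ring
        rw [this, Finset.sum_add_distrib, ← Finset.mul_sum, hx₀a, mul_one]
      set c : ℝ := (∑ i, a i * x i) + ε with hc
      have hcpos : 0 < c := by
        have := ha x hx
        positivity
      refine ⟨c, hcpos.le, c⁻¹ • (x + ε • x₀), ?_, ?_⟩
      · apply subset_convexHull
        rw [hX]
        constructor
        · exact hcone _ hmem c⁻¹ (inv_nonneg.mpr hcpos.le)
        · have : ∑ i, a i * (c⁻¹ • (x + ε • x₀)) i
              = c⁻¹ * ∑ i, a i * (x + ε • x₀) i := by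
            rw [Finset.mul_sum]
            apply Finset.sum_congr rfl
            intro i _
            simp [Pi.smul_apply, smul_eq_mul]; ring
          rw [this, hval, inv_mul_cancel₀ hcpos.ne']
      · rw [smul_smul, mul_inv_cancel₀ hcpos.ne', one_smul]
    have htend : Filter.Tendsto (fun k : ℕ => x + (1 / (k + 1) : ℝ) • x₀)
        Filter.atTop (nhds x) := by
      have h0 : Filter.Tendsto (fun k : ℕ => ((1 / (k + 1) : ℝ)) • x₀)
          Filter.atTop (nhds ((0 : ℝ) • x₀)) :=
        tendsto_one_div_add_atTop_nhds_zero_nat.smul_const x₀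
      rw [zero_smul] at h0
      have := Filter.Tendsto.add (tendsto_const_nhds (x := x) (f := Filter.atTop)) h0
      simpa using this
    apply mem_closure_of_tendsto htend
    filter_upwards with k
    exact key _ (by positivity)
end

section
/- Let C be a closed convex cone in ℝ^n, let c ∈ ℝ^n, and let a be a nonzero element of the dual cone C†. Define f_p = sup{ γ ∈ ℝ : c − γ a ∈ C } and f_d = inf{ cᵀv : aᵀv = 1, v ∈ C† }. Then f_p = f_d (strong duality holds), where sup and inf are taken in the extended reals. -/
/-!
Weak duality is immediate: if `c - γ • a ∈ C`, `v ∈ C†` and `⟪a, v⟫ = 1`, then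
`0 ≤ ⟪c - γ • a, v⟫ = ⟪c, v⟫ - γ`.

For the converse, let every primal value be at most `r` and every dual value at least `d`, and
suppose `r < d`. Map `C†` to the plane by `v ↦ (⟪a, v⟫, ⟪c, v⟫)`. If `(1, r)` lies in the closure
of the image, then rescaling preimages of nearby points with positive first coordinate gives
dual feasible points of value close to `r`, so `d ≤ r`. Otherwise Farkas' lemma, with `C†† = C`,
yields `s, t` with `s • a + t • c ∈ C` and `s + t r < 0`. Testing this against the dual feasible
point `a / ‖a‖²` forces `t > 0`, and then `γ = -s / t > r` is primal feasible.
-/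

open scoped RealInnerProductSpace
open Set

lemma EReal.sSup_image_coe_eq_sInf_image_coe {α β : Type*} {f : α → ℝ} {g : β → ℝ}
    {s : Set α} {t : Set β} (hweak : ∀ x ∈ s, ∀ y ∈ t, f x ≤ g y)
    (hstrong : ∀ d r : ℝ, (∀ y ∈ t, d ≤ g y) → (∀ x ∈ s, f x ≤ r) → d ≤ r) :
    sSup ((fun x => (f x : EReal)) '' s) = sInf ((fun y => (g y : EReal)) '' t) := by
  refine le_antisymm (sSup_le ?_) (not_lt.1 fun h => ?_)
  · rintro _ ⟨x, hx, rfl⟩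
    refine le_sInf ?_
    rintro _ ⟨y, hy, rfl⟩
    exact EReal.coe_le_coe_iff.2 (hweak x hx y hy)
  · obtain ⟨r, hsr, hrt⟩ := EReal.exists_between_coe_real h
    obtain ⟨d, hrd, hdt⟩ := EReal.exists_between_coe_real hrt
    refine (EReal.coe_lt_coe_iff.1 hrd).not_ge (hstrong d r (fun y hy => ?_) fun x hx => ?_)
    · exact EReal.coe_le_coe_iff.1 (hdt.le.trans (sInf_le (mem_image_of_mem _ hy)))
    · exact EReal.coe_le_coe_iff.1 ((le_sSup (mem_image_of_mem _ hx)).trans hsr.le)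

namespace ProperCone

section Convex

variable {E : Type*} [AddCommGroup E] [Module ℝ E] [TopologicalSpace E]

def ofConvex (C : Set E) (hclosed : IsClosed C) (hconv : Convex ℝ C) (h0 : (0 : E) ∈ C)
    (hcone : ∀ x ∈ C, ∀ t : ℝ, 0 ≤ t → t • x ∈ C) : ProperCone ℝ E where
  carrier := C
  add_mem' {x y} hx hy := by
    have half : (0 : ℝ) ≤ 1 / 2 := by norm_num
    have := hcone _ (hconv hx hy half half (by norm_num)) 2 (by norm_num)
    rwa [smul_add, smul_smul, smul_smul, show (2 : ℝ) * (1 / 2) = 1 by norm_num, one_smul,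
      one_smul] at this
  zero_mem' := h0
  smul_mem' t x hx := hcone x hx t t.2
  isClosed' := hclosed

end Convex

section InnerProductSpace

variable {E : Type*} [NormedAddCommGroup E] [InnerProductSpace ℝ E]

noncomputable def innerPairL (a c : E) : E →L[ℝ] WithLp 2 (ℝ × ℝ) :=
  (WithLp.prodContinuousLinearEquiv 2 ℝ ℝ ℝ).symm.toContinuousLinearMap.comp
    ((innerSL ℝ a).prod (innerSL ℝ c))

@[simp] lemma innerPairL_apply (a c x : E) :
    innerPairL a c x = WithLp.toLp 2 (⟪a, x⟫, ⟪c, x⟫) := rfl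

variable [CompleteSpace E] {C : ProperCone ℝ E} {a c v : E} {γ d r : ℝ}

lemma adjoint_innerPairL_apply (y : WithLp 2 (ℝ × ℝ)) :
    (innerPairL a c).adjoint y = y.fst • a + y.snd • c := by
  refine ext_inner_right ℝ fun x => ?_
  simp [ContinuousLinearMap.adjoint_inner_left, inner_add_left, real_inner_smul_left, mul_comm]

lemma le_inner_of_sub_smul_mem (hγ : c - γ • a ∈ C) (hv : v ∈ innerDual (C : Set E))
    (hav : ⟪a, v⟫ = 1) : γ ≤ ⟪c, v⟫ := by
  have := mem_innerDual.1 hv hγ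
  rw [inner_sub_left, real_inner_smul_left, hav] at this
  linarith

lemma mem_map_innerPairL_or_exists (r : ℝ) :
    WithLp.toLp 2 (1, r) ∈ (innerDual (C : Set E)).map (innerPairL a c) ∨
      ∃ s t : ℝ, s • a + t • c ∈ C ∧ s + t * r < 0 := by
  rw [or_iff_not_imp_right, relative_hyperplane_separation, innerDual_innerDual]
  push Not
  intro h y hy
  simpa using h y.fst y.snd (by rwa [adjoint_innerPairL_apply] at hy)

lemma le_of_mem_map_innerPairL (hd : ∀ v ∈ innerDual (C : Set E), ⟪a, v⟫ = 1 → d ≤ ⟪c, v⟫)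
    (hr : WithLp.toLp 2 (1, r) ∈ (innerDual (C : Set E)).map (innerPairL a c)) : d ≤ r := by
  set U : Set (WithLp 2 (ℝ × ℝ)) := {p | 0 < p.fst}
  set H : Set (WithLp 2 (ℝ × ℝ)) := {p | d * p.fst ≤ p.snd}
  have hU : IsOpen U := isOpen_lt continuous_const (by fun_prop)
  have hH : IsClosed H := isClosed_le (by fun_prop) (by fun_prop)
  have himage : U ∩ innerPairL a c '' (innerDual (C : Set E) : Set E) ⊆ H := by
    rintro _ ⟨hpos, v, hv, rfl⟩
    replace hpos : 0 < ⟪a, v⟫ := hpos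
    have := hd (⟪a, v⟫⁻¹ • v) ((innerDual (C : Set E)).smul_mem hv (inv_nonneg.2 hpos.le))
      (by rw [real_inner_smul_right, inv_mul_cancel₀ hpos.ne'])
    rw [real_inner_smul_right, le_inv_mul_iff₀ hpos] at this
    simpa [H, mul_comm] using this
  have : WithLp.toLp 2 (1, r) ∈ H :=
    hH.closure_subset_iff.2 himage <| hU.inter_closure ⟨by simp [U], hr⟩
  simpa [H] using this

lemma exists_lt_sub_smul_mem_of_smul_add_smul_mem (ha : a ∈ innerDual (C : Set E)) (ha0 : a ≠ 0)
    (hd : ∀ v ∈ innerDual (C : Set E), ⟪a, v⟫ = 1 → d ≤ ⟪c, v⟫) (hrd : r < d) {s t : ℝ}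
    (hst : s • a + t • c ∈ C) (hsr : s + t * r < 0) : ∃ γ, r < γ ∧ c - γ • a ∈ C := by
  set v₀ := (‖a‖ ^ 2)⁻¹ • a
  have hav₀ : ⟪a, v₀⟫ = 1 := by
    rw [real_inner_smul_right, real_inner_self_eq_norm_sq, inv_mul_cancel₀ (by positivity)]
  have hv₀ : v₀ ∈ innerDual (C : Set E) := (innerDual (C : Set E)).smul_mem ha (by positivity)
  have hst₀ : 0 ≤ s + t * ⟪c, v₀⟫ := by
    simpa [inner_add_left, real_inner_smul_left, hav₀] using mem_innerDual.1 hv₀ hst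
  have ht : 0 < t := by nlinarith [hd v₀ hv₀ hav₀]
  refine ⟨-s / t, by rw [lt_div_iff₀ ht]; linarith, ?_⟩
  convert C.smul_mem hst (inv_nonneg.2 ht.le) using 1
  rw [smul_add, smul_smul, smul_smul, inv_mul_cancel₀ ht.ne', one_smul, neg_div, neg_smul,
    sub_neg_eq_add, div_eq_inv_mul, add_comm]

lemma le_of_forall_le_inner_of_forall_le (ha : a ∈ innerDual (C : Set E)) (ha0 : a ≠ 0)
    (hd : ∀ v ∈ innerDual (C : Set E), ⟪a, v⟫ = 1 → d ≤ ⟪c, v⟫)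
    (hr : ∀ γ, c - γ • a ∈ C → γ ≤ r) : d ≤ r := by
  by_contra! hrd
  obtain hmem | ⟨s, t, hst, hsr⟩ := mem_map_innerPairL_or_exists (C := C) (a := a) (c := c) r
  · exact hrd.not_ge (le_of_mem_map_innerPairL hd hmem)
  · obtain ⟨γ, hrγ, hγ⟩ := exists_lt_sub_smul_mem_of_smul_add_smul_mem ha ha0 hd hrd hst hsr
    exact hrγ.not_ge (hr γ hγ)

theorem sSup_sub_smul_mem_eq_sInf_inner (C : ProperCone ℝ E) (ha : a ∈ innerDual (C : Set E))
    (ha0 : a ≠ 0) (c : E) :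
    sSup ((fun γ : ℝ => (γ : EReal)) '' {γ : ℝ | c - γ • a ∈ C}) =
      sInf ((fun v : E => ((⟪c, v⟫ : ℝ) : EReal)) ''
        {v | ⟪a, v⟫ = 1 ∧ v ∈ innerDual (C : Set E)}) :=
  EReal.sSup_image_coe_eq_sInf_image_coe (f := id)
    (fun _ hγ _ hv => le_inner_of_sub_smul_mem hγ hv.2 hv.1)
    (fun _ _ hd hr => le_of_forall_le_inner_of_forall_le ha ha0 (fun v hv hav => hd v ⟨hav, hv⟩) hr)

end InnerProductSpace

end ProperCone

theorem stmt_7 (n : ℕ) (C : Set (Fin n → ℝ))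
    (hclosed : IsClosed C) (hconv : Convex ℝ C) (h0 : (0 : Fin n → ℝ) ∈ C)
    (hcone : ∀ x ∈ C, ∀ t : ℝ, 0 ≤ t → t • x ∈ C)
    (c a : Fin n → ℝ) (ha : ∀ x ∈ C, 0 ≤ ∑ i, a i * x i) (ha0 : a ≠ 0) :
    sSup ((fun γ : ℝ => (γ : EReal)) '' {γ : ℝ | c - γ • a ∈ C}) =
    sInf ((fun v : Fin n → ℝ => ((∑ i, c i * v i : ℝ) : EReal)) ''
      {v : Fin n → ℝ | (∑ i, a i * v i) = 1 ∧ ∀ x ∈ C, 0 ≤ ∑ i, v i * x i}) := by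
  set K := (ProperCone.ofConvex C hclosed hconv h0 hcone).comap
    (PiLp.continuousLinearEquiv 2 ℝ (fun _ : Fin n => ℝ) : EuclideanSpace ℝ (Fin n) →L[ℝ] _)
  have key := K.sSup_sub_smul_mem_eq_sInf_inner (a := WithLp.toLp 2 a) (fun x hx => ha _ hx)
    (by simpa using ha0) (WithLp.toLp 2 c)
  have hinner (v : Fin n → ℝ) : ⟪WithLp.toLp 2 a, WithLp.toLp 2 v⟫ = ∑ i, a i * v i := by
    simp [EuclideanSpace.inner_toLp_toLp, dotProduct, mul_comm]
  have hprimal : {γ : ℝ | WithLp.toLp 2 c - γ • WithLp.toLp 2 a ∈ K} = {γ | c - γ • a ∈ C} := rfl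
  have hdual : {v | ⟪WithLp.toLp 2 a, v⟫ = 1 ∧ v ∈ ProperCone.innerDual (K : Set _)} =
      WithLp.toLp 2 '' {v : Fin n → ℝ | (∑ i, a i * v i) = 1 ∧ ∀ x ∈ C, 0 ≤ ∑ i, v i * x i} := by
    ext v
    constructor
    · rintro ⟨hav, hv⟩
      exact ⟨v.ofLp, ⟨(hinner v.ofLp).symm.trans hav, fun x hx => hv (x := WithLp.toLp 2 x) hx⟩,
        rfl⟩
    · rintro ⟨v, ⟨hav, hv⟩, rfl⟩
      exact ⟨(hinner v).trans hav, fun x hx => hv x.ofLp hx⟩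
  rw [hprimal, hdual, Set.image_image] at key
  simpa only [EuclideanSpace.inner_toLp_toLp, star_trivial, dotProduct, mul_comm] using key
end

section
/- Let A be an n × m real matrix with distinct columns, let F be a face of the Newton polytope P = conv{a_1,...,a_m}, and let c ∈ ℝ^m. Define f(x) = Σ_{i=1}^m c_i exp(a_iᵀ x) and g(x) = Σ_{i : a_i ∈ F} c_i exp(a_iᵀ x). If inf_{x ∈ ℝ^n} g(x) < 0, then inf_{x ∈ ℝ^n} f(x) < 0. -/
/-!
Move along the direction `s` that exposes the face: at `x₀ + t • s` the term `i` of `f` is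
`c i * exp (aᵢ ⬝ x₀) * exp (t * (s ⬝ aᵢ))`. After dividing by `exp (t * max_i s ⬝ aᵢ)`, the terms
with `aᵢ` on the face stay fixed and the others decay to `0`, so `f(x₀ + t • s)` eventually has the
sign of `g(x₀) < 0`.
-/

open Filter Topology Finset

section ExpSum

variable {ι : Type*} [Fintype ι] (b d : ι → ℝ) {M : ℝ}

theorem tendsto_sum_mul_exp_mul_sub (hd : ∀ i, d i ≤ M) :
    Tendsto (fun t => ∑ i, b i * Real.exp (t * (d i - M))) atTop
      (𝓝 (∑ i, if d i = M then b i else 0)) := by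
  refine tendsto_finsetSum _ fun i _ => ?_
  by_cases hi : d i = M
  · simp only [hi, if_true, sub_self, mul_zero, Real.exp_zero, mul_one, tendsto_const_nhds]
  · have hneg : d i - M < 0 := sub_neg.mpr ((hd i).lt_of_ne hi)
    have hexp : Tendsto (fun t => Real.exp (t * (d i - M))) atTop (𝓝 0) :=
      Real.tendsto_exp_atBot.comp (tendsto_id.atTop_mul_const_of_neg hneg)
    simpa [hi] using hexp.const_mul (b i)

theorem exists_sum_mul_exp_mul_neg (hd : ∀ i, d i ≤ M)
    (hlead : ∑ i, (if d i = M then b i else 0) < 0) :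
    ∃ t, ∑ i, b i * Real.exp (t * d i) < 0 := by
  obtain ⟨t, ht⟩ := ((tendsto_sum_mul_exp_mul_sub b d hd).eventually_lt_const hlead).exists
  refine ⟨t, ?_⟩
  have hfactor : ∑ i, b i * Real.exp (t * d i)
      = Real.exp (t * M) * ∑ i, b i * Real.exp (t * (d i - M)) := by
    rw [mul_sum]
    refine sum_congr rfl fun i _ => ?_
    rw [mul_sub, Real.exp_sub]
    field_simp
  rw [hfactor]
  exact mul_neg_of_pos_of_neg (Real.exp_pos _) ht

end ExpSum

theorem mem_argmax_iff_eq {α : Type*} {K : Set α} (ℓ : α → ℝ) {p q : α}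
    (hp : p ∈ {x ∈ K | ∀ y ∈ K, ℓ y ≤ ℓ x}) (hq : q ∈ K) :
    q ∈ {x ∈ K | ∀ y ∈ K, ℓ y ≤ ℓ x} ↔ ℓ q = ℓ p :=
  ⟨fun h => le_antisymm (hp.2 q hq) (h.2 p hp.1),
    fun h => ⟨hq, fun y hy => h ▸ hp.2 y hy⟩⟩

open scoped Classical in
theorem stmt_8_general (n m : ℕ) (a : Fin m → (Fin n → ℝ))
    (c : Fin m → ℝ) (F : Set (Fin n → ℝ))
    (hF : F = convexHull ℝ (Set.range a) ∨
      ∃ s : Fin n → ℝ, F = {p ∈ convexHull ℝ (Set.range a) |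
        ∀ q ∈ convexHull ℝ (Set.range a), ∑ j, s j * q j ≤ ∑ j, s j * p j})
    (hg : ∃ x : Fin n → ℝ,
      (∑ i, (if a i ∈ F then c i else 0) * Real.exp (∑ j, a i j * x j)) < 0) :
    ∃ x : Fin n → ℝ, (∑ i, c i * Real.exp (∑ j, a i j * x j)) < 0 := by
  have hmem (i) : a i ∈ convexHull ℝ (Set.range a) := subset_convexHull ℝ _ ⟨i, rfl⟩
  obtain ⟨x₀, hx₀⟩ := hg
  obtain ⟨i₀, hi₀⟩ : ∃ i₀, a i₀ ∈ F := by
    by_contra! h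
    simp [h] at hx₀
  rcases hF with rfl | ⟨s, rfl⟩
  · exact ⟨x₀, by simpa only [hmem, if_true] using hx₀⟩
  set d : Fin m → ℝ := fun i => ∑ j, s j * a i j
  have hface (i) := mem_argmax_iff_eq (fun q => ∑ j, s j * q j) hi₀ (hmem i)
  obtain ⟨t, ht⟩ := exists_sum_mul_exp_mul_neg
    (fun i => c i * Real.exp (∑ j, a i j * x₀ j)) d (M := d i₀) (fun i => hi₀.2 _ (hmem i)) (by
      convert hx₀ using 2 with i
      simp only [hface i, ite_mul, zero_mul, d])
  refine ⟨x₀ + t • s, lt_of_eq_of_lt (sum_congr rfl fun i _ => ?_) ht⟩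
  have hexponent : ∑ j, a i j * (x₀ + t • s) j = ∑ j, a i j * x₀ j + t * d i := by
    simp only [d, Pi.add_apply, Pi.smul_apply, smul_eq_mul, mul_sum, ← sum_add_distrib]
    exact sum_congr rfl fun j _ => by ring
  rw [hexponent, Real.exp_add, mul_assoc]

open scoped Classical in
theorem stmt_8 (n m : ℕ) (a : Fin m → (Fin n → ℝ)) (ha : Function.Injective a)
    (c : Fin m → ℝ) (F : Set (Fin n → ℝ))
    (hF : F = convexHull ℝ (Set.range a) ∨
      ∃ s : Fin n → ℝ, F = {p ∈ convexHull ℝ (Set.range a) |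
        ∀ q ∈ convexHull ℝ (Set.range a), ∑ j, s j * q j ≤ ∑ j, s j * p j})
    (hg : ∃ x : Fin n → ℝ,
      (∑ i, (if a i ∈ F then c i else 0) * Real.exp (∑ j, a i j * x j)) < 0) :
    ∃ x : Fin n → ℝ, (∑ i, c i * Real.exp (∑ j, a i j * x j)) < 0 :=
  stmt_8_general n m a c F hF hg
end

section
/- Let A = [A^(1), ..., A^(k)] be a partition of the columns of an n × m real matrix A such that the Newton polytopes conv(columns of A^(i)) are mutually disjoint faces of conv(columns of A). Then the cone of coefficient vectors of globally nonnegative signomials over A equals the direct (Cartesian) product of the cones of coefficient vectors of globally nonnegative signomials over each A^(i): that is, writing c = (c^(1),...,c^(k)) according to the partition, the signomial Σ_i Σ_j c^(i)_j exp((a^(i)_j)ᵀ x) is nonnegative on ℝ^n if and only if each signomial Σ_j c^(i)_j exp((a^(i)_j)ᵀ x) is nonnegative on ℝ^n. -/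
/-- `F` is a face of the polytope `P`: either `P` itself or the set of
maximizers over `P` of some linear functional. -/
def IsFaceOf {n : ℕ} (P F : Set (Fin n → ℝ)) : Prop :=
  F = P ∨ ∃ s : Fin n → ℝ, F = {p ∈ P | ∀ q ∈ P, ∑ j, s j * q j ≤ ∑ j, s j * p j}

theorem stmt_9 (n k : ℕ) (mi : Fin k → ℕ)
    (a : (i : Fin k) → Fin (mi i) → (Fin n → ℝ))
    (hface : ∀ i, IsFaceOf (convexHull ℝ (⋃ i', Set.range (a i')))
      (convexHull ℝ (Set.range (a i))))
    (hdisj : ∀ i j, i ≠ j →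
      Disjoint (convexHull ℝ (Set.range (a i))) (convexHull ℝ (Set.range (a j))))
    (c : (i : Fin k) → Fin (mi i) → ℝ) :
    (∀ x : Fin n → ℝ, 0 ≤ ∑ i, ∑ j, c i j * Real.exp (∑ r, a i j r * x r)) ↔
    (∀ i, ∀ x : Fin n → ℝ, 0 ≤ ∑ j, c i j * Real.exp (∑ r, a i j r * x r)) := by
  constructor
  · intro h i x
    rcases isEmpty_or_nonempty (Fin (mi i)) with he | hne
    · rw [Finset.univ_eq_empty, Finset.sum_empty]
    · have hmemP : ∀ i' (j : Fin (mi i')),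
          a i' j ∈ convexHull ℝ (⋃ i'', Set.range (a i'')) := fun i' j =>
        subset_convexHull ℝ _ (Set.mem_iUnion.2 ⟨i', Set.mem_range_self j⟩)
      have hmemF : ∀ i' (j : Fin (mi i')),
          a i' j ∈ convexHull ℝ (Set.range (a i')) := fun i' j =>
        subset_convexHull ℝ _ (Set.mem_range_self j)
      rcases hface i with hFP | ⟨s, hs⟩
      · -- the face is the whole polytope: all other groups are empty
        have hempty : ∀ i', i' ≠ i → IsEmpty (Fin (mi i')) := by
          intro i' hi'
          by_contra hcon
          rw [not_isEmpty_iff] at hcon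
          obtain ⟨j⟩ := hcon
          have h2 : a i' j ∈ convexHull ℝ (Set.range (a i)) := by
            rw [hFP]; exact hmemP i' j
          exact Set.disjoint_left.mp (hdisj i i' (Ne.symm hi')) h2 (hmemF i' j)
        have h0 := h x
        rwa [Finset.sum_eq_single i (fun i' _ hi' => by
          haveI := hempty i' hi'
          rw [Finset.univ_eq_empty, Finset.sum_empty]) (by simp)] at h0
      · -- the face is a maximizer set of s
        obtain ⟨j0⟩ := hne
        set M : ℝ := ∑ r, s r * a i j0 r with hM
        have hF0 := hs ▸ hmemF i j0
        have hMmax : ∀ q ∈ convexHull ℝ (⋃ i'', Set.range (a i'')),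
            ∑ r, s r * q r ≤ M := hF0.2
        have hDeq : ∀ j, ∑ r, s r * a i j r = M := by
          intro j
          have hFj := hs ▸ hmemF i j
          exact le_antisymm (hMmax _ hFj.1) (hFj.2 _ hF0.1)
        have hDlt : ∀ i', i' ≠ i → ∀ j, (∑ r, s r * a i' j r) < M := by
          intro i' hi' j
          rcases lt_or_eq_of_le (hMmax _ (hmemP i' j)) with hlt | heq
          · exact hlt
          · exfalso
            have hmem : a i' j ∈ convexHull ℝ (Set.range (a i)) := by
              rw [hs]
              exact ⟨hmemP i' j, fun q hq => (hMmax q hq).trans_eq heq.symm⟩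
            exact Set.disjoint_left.mp (hdisj i i' (Ne.symm hi')) hmem (hmemF i' j)
        -- algebra key
        have key : ∀ i' (j : Fin (mi i')) (t : ℝ),
            (∑ r, a i' j r * (t * s r + x r)) =
              t * (∑ r, s r * a i' j r) + (∑ r, a i' j r * x r) := by
          intro i' j t
          rw [Finset.mul_sum, ← Finset.sum_add_distrib]
          exact Finset.sum_congr rfl fun r _ => by ring
        have expand : ∀ (cc e d t : ℝ),
            cc * Real.exp e * Real.exp (t * (d - M)) =
              Real.exp (-(t * M)) * (cc * Real.exp (t * d + e)) := by
          intro cc e d t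
          have h1 : e + t * (d - M) = (t * d + e) + -(t * M) := by ring
          rw [mul_assoc, ← Real.exp_add, h1, Real.exp_add]
          ring
        set g : ℝ → ℝ := fun t => ∑ i', ∑ j, c i' j * Real.exp (∑ r, a i' j r * x r) *
          Real.exp (t * ((∑ r, s r * a i' j r) - M)) with hg
        have hg_nonneg : ∀ t, 0 ≤ g t := by
          intro t
          have hgt : g t = Real.exp (-(t * M)) *
              ∑ i', ∑ j, c i' j * Real.exp (∑ r, a i' j r * (t * s r + x r)) := by
            rw [hg]
            simp only [Finset.mul_sum]
            refine Finset.sum_congr rfl fun i' _ => Finset.sum_congr rfl fun j _ => ?_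
            rw [key i' j t]
            exact expand _ _ _ _
          rw [hgt]
          exact mul_nonneg (Real.exp_pos _).le (h _)
        have htend : Filter.Tendsto g Filter.atTop
            (nhds (∑ i', ∑ j, c i' j * Real.exp (∑ r, a i' j r * x r) *
              (if i' = i then (1:ℝ) else 0))) := by
          rw [hg]
          refine tendsto_finset_sum _ fun i' _ => tendsto_finset_sum _ fun j _ => ?_
          by_cases hii : i' = i
          · subst hii
            simp only [hDeq j, sub_self, mul_zero, Real.exp_zero, if_pos rfl]
            exact tendsto_const_nhds
          · rw [if_neg hii]
            have hd : (∑ r, s r * a i' j r) - M < 0 := sub_neg.2 (hDlt i' hii j)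
            have h1 : Filter.Tendsto (fun t : ℝ => t * ((∑ r, s r * a i' j r) - M))
                Filter.atTop Filter.atBot := Filter.Tendsto.atTop_mul_const_of_neg hd Filter.tendsto_id
            have h2 : Filter.Tendsto (fun t : ℝ =>
                Real.exp (t * ((∑ r, s r * a i' j r) - M))) Filter.atTop (nhds 0) :=
              Real.tendsto_exp_atBot.comp h1
            have := (tendsto_const_nhds (α := ℝ)
              (x := c i' j * Real.exp (∑ r, a i' j r * x r))).mul h2
            simpa using this
        have hlim : (∑ i', ∑ j, c i' j * Real.exp (∑ r, a i' j r * x r) *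
            (if i' = i then (1:ℝ) else 0)) =
            ∑ j, c i j * Real.exp (∑ r, a i j r * x r) := by
          rw [Finset.sum_eq_single i (fun i' _ hi' => by simp [if_neg hi']) (by simp)]
          simp
        rw [← hlim]
        exact ge_of_tendsto' htend hg_nonneg
  · intro h x
    exact Finset.sum_nonneg fun i _ => h i x
end

section
/- Let U be a linear subspace of ℝ^m and let T = log(closure(conv(exp(U)))), where exp acts componentwise on vectors in U, conv denotes convex hull, and log acts componentwise (with log 0 = −∞ allowed). Then T is invariant under translation by elements of U: for every v ∈ U, v + T = T. -/
open scoped Classical in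
theorem stmt_12 (m : ℕ) (U : Submodule ℝ (Fin m → ℝ))
    (T : Set (Fin m → EReal))
    (hT : T = {y : Fin m → EReal |
      ∃ x ∈ closure (convexHull ℝ ((fun u : Fin m → ℝ => fun i => Real.exp (u i)) ''
          (U : Set (Fin m → ℝ)))),
        ∀ i, y i = if x i = 0 then (⊥ : EReal) else ((Real.log (x i) : ℝ) : EReal)})
    (v : Fin m → ℝ) (hv : v ∈ U) :
    (fun y : Fin m → EReal => fun i => (v i : EReal) + y i) '' T = T := by
  set E : Set (Fin m → ℝ) :=
    (fun u : Fin m → ℝ => fun i => Real.exp (u i)) '' (U : Set (Fin m → ℝ)) with hE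
  set S := closure (convexHull ℝ E) with hS
  have key : ∀ w : Fin m → ℝ, w ∈ U → ∀ x ∈ S, (fun i => Real.exp (w i) * x i) ∈ S := by
    intro w hw x hx
    set φ : (Fin m → ℝ) →ₗ[ℝ] (Fin m → ℝ) :=
      LinearMap.pi (fun i => Real.exp (w i) • LinearMap.proj i) with hφ
    have hφx : ∀ x : Fin m → ℝ, φ x = fun i => Real.exp (w i) * x i := fun _ => rfl
    have hcont : Continuous φ := φ.continuous_of_finiteDimensional
    have himg : φ '' E = E := by
      apply Set.Subset.antisymm
      · rintro _ ⟨_, ⟨u, hu, rfl⟩, rfl⟩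
        refine ⟨w + u, U.add_mem hw hu, ?_⟩
        funext i
        simp [hφx, Real.exp_add]
      · rintro _ ⟨u, hu, rfl⟩
        refine ⟨fun i => Real.exp (u i - w i), ⟨u - w, U.sub_mem hu hw, rfl⟩, ?_⟩
        funext i
        rw [hφx]
        simp [← Real.exp_add]
    have : φ x ∈ closure (φ '' convexHull ℝ E) :=
      image_closure_subset_closure_image hcont ⟨x, hx, rfl⟩
    rwa [φ.image_convexHull, himg, hφx] at this
  rw [hT]
  ext y
  constructor
  · rintro ⟨z, ⟨x, hx, hz⟩, rfl⟩
    refine ⟨fun i => Real.exp (v i) * x i, key v hv x hx, fun i => ?_⟩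
    beta_reduce
    rw [hz i]
    by_cases h : x i = 0
    · simp [h, Real.exp_ne_zero]
    · have h2 : Real.exp (v i) * x i ≠ 0 := mul_ne_zero (Real.exp_ne_zero _) h
      simp only [h, h2, if_false]
      rw [← EReal.coe_add, Real.log_mul (Real.exp_ne_zero _) h, Real.log_exp]
  · rintro ⟨x, hx, hy⟩
    refine ⟨fun i => if Real.exp (-v i) * x i = 0 then (⊥ : EReal)
        else ((Real.log (Real.exp (-v i) * x i) : ℝ) : EReal),
      ⟨fun i => Real.exp (-v i) * x i, ?_, fun i => rfl⟩, ?_⟩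
    · have := key (-v) (U.neg_mem hv) x hx
      simpa using this
    · funext i
      rw [hy i]
      by_cases h : x i = 0
      · simp [h, Real.exp_ne_zero]
      · have h2 : Real.exp (-v i) * x i ≠ 0 := mul_ne_zero (Real.exp_ne_zero _) h
        simp only [h, h2, if_false]
        rw [← EReal.coe_add, Real.log_mul (Real.exp_ne_zero _) h]
        norm_num
end

section
/- Let a_1,...,a_{n+1} ∈ ℝ^n be affinely independent, let β = Σ_{i=1}^{n+1} λ_i a_i for a probability vector λ with all λ_i > 0, and let c ∈ ℝ^{n+1}_{++}. Then the signomial f(x) = Σ_{i=1}^{n+1} c_i exp(a_iᵀ x) − b·exp(βᵀ x) is nonnegative on ℝ^n if and only if b ≤ Π_{i=1}^{n+1} (c_i/λ_i)^{λ_i}. -/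
/-!
The bound is weighted AM–GM applied to the terms `(c i / lam i) * exp (a i ⬝ᵥ x)` with weights
`lam i`: their weighted geometric mean is `(∏ i, (c i / lam i) ^ lam i) * exp (β ⬝ᵥ x)`.
Equality in AM–GM holds when all the terms are equal, i.e. `a i ⬝ᵥ x = log (lam i / c i) - t`
for some `t`. Affine independence of the `a i` makes the lifted vectors `(a i, 1)` linearly
independent, so this system has a solution `(x, t)`, and at that `x` the AM–GM bound is sharp.
-/

open Real Matrix

theorem Matrix.mulVec_surjective_of_linearIndependent_row {K ι m : Type*} [Field K]
    [Fintype ι] [Fintype m] {M : Matrix ι m K} (h : LinearIndependent K M.row) :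
    Function.Surjective M.mulVec := by
  have hrank : Module.finrank K (LinearMap.range M.mulVecLin) = Module.finrank K (ι → K) := by
    rw [← Matrix.rank.eq_1, rank_eq_finrank_span_row, finrank_span_eq_card h,
      Module.finrank_fintype_fun_eq_card]
  exact LinearMap.range_eq_top.1 (Submodule.eq_top_of_finrank_eq hrank)

section AffineIndependent

variable {K ι m : Type*} [Field K] {a : ι → m → K}

theorem AffineIndependent.linearIndependent_sumElim_one (ha : AffineIndependent K a) :
    LinearIndependent K fun i => Sum.elim (a i) (1 : Unit → K) := by
  rw [linearIndependent_iff']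
  intro s g hg i hi
  refine affineIndependent_iff.1 ha s g ?_ ?_ i hi
  · simpa [Finset.sum_apply] using congrFun hg (Sum.inr ())
  · funext j
    simpa [Finset.sum_apply] using congrFun hg (Sum.inl j)

theorem AffineIndependent.exists_dotProduct_add_eq [Fintype ι] [Fintype m]
    (ha : AffineIndependent K a) (w : ι → K) : ∃ x t, ∀ i, a i ⬝ᵥ x + t = w i := by
  obtain ⟨z, hz⟩ := mulVec_surjective_of_linearIndependent_row
    (M := of fun i => Sum.elim (a i) 1) ha.linearIndependent_sumElim_one w
  refine ⟨z ∘ Sum.inl, z (Sum.inr ()), fun i => ?_⟩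
  simpa [mulVec, dotProduct, Fintype.sum_sum_type] using congrFun hz i

end AffineIndependent

section WeightedAMGM

variable {ι : Type*} [Fintype ι] {lam c : ι → ℝ}

theorem prod_div_rpow_mul_exp_le_sum_mul_exp (hlam : ∀ i, 0 < lam i) (hlam1 : ∑ i, lam i = 1)
    (hc : ∀ i, 0 ≤ c i) (y : ι → ℝ) :
    (∏ i, (c i / lam i) ^ lam i) * exp (∑ i, lam i * y i) ≤ ∑ i, c i * exp (y i) :=
  calc (∏ i, (c i / lam i) ^ lam i) * exp (∑ i, lam i * y i)
      = ∏ i, (c i / lam i * exp (y i)) ^ lam i := by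
        rw [exp_sum, ← Finset.prod_mul_distrib]
        refine Finset.prod_congr rfl fun i _ => ?_
        rw [mul_rpow (div_nonneg (hc i) (hlam i).le) (exp_pos _).le, ← exp_mul, mul_comm (y i)]
    _ ≤ ∑ i, lam i * (c i / lam i * exp (y i)) :=
        geom_mean_le_arith_mean_weighted _ _ _ (fun i _ => (hlam i).le) hlam1
          fun i _ => mul_nonneg (div_nonneg (hc i) (hlam i).le) (exp_pos _).le
    _ = ∑ i, c i * exp (y i) :=
        Finset.sum_congr rfl fun i _ => by field_simp [(hlam i).ne']

theorem prod_div_rpow_eq_exp_sum (hlam : ∀ i, 0 < lam i) (hc : ∀ i, 0 < c i) :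
    ∏ i, (c i / lam i) ^ lam i = exp (∑ i, lam i * log (c i / lam i)) := by
  rw [exp_sum]
  exact Finset.prod_congr rfl fun i _ => by
    rw [rpow_def_of_pos (div_pos (hc i) (hlam i)), mul_comm]

theorem sum_mul_exp_eq_prod_div_rpow_mul_exp (hlam : ∀ i, 0 < lam i) (hlam1 : ∑ i, lam i = 1)
    (hc : ∀ i, 0 < c i) (s : ℝ) :
    ∑ i, c i * exp (log (lam i / c i) + s) =
      (∏ i, (c i / lam i) ^ lam i) * exp (∑ i, lam i * (log (lam i / c i) + s)) := by
  have hlhs : ∑ i, c i * exp (log (lam i / c i) + s) = ∑ i, lam i * exp s :=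
    Finset.sum_congr rfl fun i _ => by
      rw [exp_add, exp_log (div_pos (hlam i) (hc i))]
      field_simp [(hc i).ne']
  have hexponent : ∑ i, lam i * log (c i / lam i) + ∑ i, lam i * (log (lam i / c i) + s) =
      ∑ i, lam i * s := by
    rw [← Finset.sum_add_distrib]
    refine Finset.sum_congr rfl fun i _ => ?_
    rw [log_div (hc i).ne' (hlam i).ne', log_div (hlam i).ne' (hc i).ne']
    ring
  rw [hlhs, ← Finset.sum_mul, prod_div_rpow_eq_exp_sum hlam hc, ← exp_add, hexponent,
    ← Finset.sum_mul, hlam1, one_mul, one_mul]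

end WeightedAMGM

theorem stmt_15 (n : ℕ) (a : Fin (n + 1) → (Fin n → ℝ))
    (hind : AffineIndependent ℝ a)
    (lam : Fin (n + 1) → ℝ) (hlam : ∀ i, 0 < lam i) (hlam1 : ∑ i, lam i = 1)
    (β : Fin n → ℝ) (hβ : β = ∑ i, lam i • a i)
    (c : Fin (n + 1) → ℝ) (hc : ∀ i, 0 < c i) (b : ℝ) :
    (∀ x : Fin n → ℝ,
        0 ≤ (∑ i, c i * Real.exp (∑ j, a i j * x j)) - b * Real.exp (∑ j, β j * x j)) ↔
    b ≤ ∏ i, (c i / lam i) ^ (lam i) := by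
  change (∀ x, 0 ≤ ∑ i, c i * exp (a i ⬝ᵥ x) - b * exp (β ⬝ᵥ x)) ↔ _
  have hβx : ∀ x, β ⬝ᵥ x = ∑ i, lam i * (a i ⬝ᵥ x) := fun x => by
    simp only [hβ, sum_dotProduct, smul_dotProduct, smul_eq_mul]
  simp only [hβx]
  constructor
  · intro h
    obtain ⟨x, t, hx⟩ := hind.exists_dotProduct_add_eq fun i => log (lam i / c i)
    have hax : ∀ i, a i ⬝ᵥ x = log (lam i / c i) + -t := fun i => by linarith [hx i]
    have hsharp := h x
    simp only [hax, sum_mul_exp_eq_prod_div_rpow_mul_exp hlam hlam1 hc, ← sub_mul] at hsharp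
    exact sub_nonneg.1 (nonneg_of_mul_nonneg_left hsharp (exp_pos _))
  · intro hb x
    have hamgm := prod_div_rpow_mul_exp_le_sum_mul_exp hlam hlam1 (fun i => (hc i).le)
      fun i => a i ⬝ᵥ x
    have hbP := mul_le_mul_of_nonneg_right hb (exp_pos (∑ i, lam i * (a i ⬝ᵥ x))).le
    linarith
end

section
/- Let A ∈ ℕ^{n×m} have distinct columns a_1,...,a_m and let c ∈ ℝ^m. Define the signomial representative coefficients ĉ by ĉ_i = c_i if all entries of a_i are even, and ĉ_i = −|c_i| otherwise. If the signomial q(y) = Σ_i ĉ_i exp(a_iᵀ y) is nonnegative on ℝ^n, then the polynomial p(x) = Σ_i c_i x^{a_i} (with x^{a_i} = Π_j x_j^{a_{ij}}) is nonnegative on ℝ^n. -/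
open scoped Classical in
theorem stmt_18 (n m : ℕ) (A : Fin m → (Fin n → ℕ)) (hA : Function.Injective A)
    (c : Fin m → ℝ)
    (chat : Fin m → ℝ)
    (hchat : ∀ i, chat i = if (∀ j, Even (A i j)) then c i else -|c i|)
    (hq : ∀ y : Fin n → ℝ, 0 ≤ ∑ i, chat i * Real.exp (∑ j, (A i j : ℝ) * y j)) :
    ∀ x : Fin n → ℝ, 0 ≤ ∑ i, c i * ∏ j, x j ^ (A i j) := by
  -- g x = Σ chat i * Π |x j| ^ A i j is nonneg everywhere
  have hg : ∀ x : Fin n → ℝ, 0 ≤ ∑ i, chat i * ∏ j, |x j| ^ (A i j) := by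
    set g : (Fin n → ℝ) → ℝ := fun x => ∑ i, chat i * ∏ j, |x j| ^ (A i j) with hgdef
    have hcont : Continuous g := by
      apply continuous_finset_sum
      intro i _
      exact continuous_const.mul (continuous_finset_prod _ fun j _ =>
        ((continuous_apply j).abs.pow _))
    have hpos : ∀ x : Fin n → ℝ, (∀ j, x j ≠ 0) → 0 ≤ g x := by
      intro x hx
      have := hq (fun j => Real.log |x j|)
      convert this using 2 with i
      congr 1
      rw [Real.exp_sum]
      apply Finset.prod_congr rfl
      intro j _
      rw [mul_comm, Real.exp_mul, Real.exp_log (abs_pos.mpr (hx j)),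
        Real.rpow_natCast]
    have hdense : Dense {x : Fin n → ℝ | ∀ j, x j ≠ 0} := by
      have : {x : Fin n → ℝ | ∀ j, x j ≠ 0} = Set.pi Set.univ (fun _ => {(0:ℝ)}ᶜ) := by
        ext x; simp [Set.mem_pi]
      rw [this]
      exact dense_pi Set.univ (fun i _ => dense_compl_singleton 0)
    intro x
    have hclosed : IsClosed {x : Fin n → ℝ | 0 ≤ g x} := isClosed_le continuous_const hcont
    have hsub : {x : Fin n → ℝ | ∀ j, x j ≠ 0} ⊆ {x | 0 ≤ g x} := hpos
    have := hclosed.closure_subset_iff.mpr hsub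
    exact this (hdense.closure_eq ▸ Set.mem_univ x : x ∈ closure _)
  intro x
  refine le_trans (hg x) (Finset.sum_le_sum fun i _ => ?_)
  rcases em (∀ j, Even (A i j)) with he | he
  · rw [hchat i, if_pos he]
    have : ∏ j, |x j| ^ (A i j) = ∏ j, x j ^ (A i j) :=
      Finset.prod_congr rfl fun j _ => (he j).pow_abs _
    rw [this]
  · rw [hchat i, if_neg he]
    have habs : |c i * ∏ j, x j ^ (A i j)| = |c i| * ∏ j, |x j| ^ (A i j) := by
      rw [abs_mul, Finset.abs_prod]
      simp [abs_pow]
    calc -|c i| * ∏ j, |x j| ^ (A i j) = -(|c i| * ∏ j, |x j| ^ (A i j)) := by ring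
      _ = -|c i * ∏ j, x j ^ (A i j)| := by rw [habs]
      _ ≤ c i * ∏ j, x j ^ (A i j) := neg_abs_le _
end

section
/- Let s ∈ ℝ^n be nonzero, r > 0, and let a_1,...,a_m ∈ ℝ^n all satisfy a_iᵀ s = r, while b_1,...,b_ℓ ∈ ℝ^n all satisfy b_jᵀ s < r. Set ŝ = r s / ‖s‖². Then for every y ∈ ℝ^n with ŝᵀ y = 0 and every coefficient vectors c ∈ ℝ^m, d ∈ ℝ^ℓ: if Σ_{i=1}^m c_i exp(a_iᵀ y) < 0, then lim_{t → ∞} [ Σ_i c_i exp(a_iᵀ(t ŝ + y)) + Σ_j d_j exp(b_jᵀ(t ŝ + y)) ] = −∞. -/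
open Filter in
theorem stmt_19 (n m ℓ : ℕ) (s : Fin n → ℝ) (hs : s ≠ 0) (r : ℝ) (hr : 0 < r)
    (a : Fin m → (Fin n → ℝ)) (ha : ∀ i, ∑ j, a i j * s j = r)
    (b : Fin ℓ → (Fin n → ℝ)) (hb : ∀ j, ∑ k, b j k * s k < r)
    (shat : Fin n → ℝ) (hshat : shat = (r / ∑ k, s k * s k) • s)
    (y : Fin n → ℝ) (hy : ∑ k, shat k * y k = 0)
    (c : Fin m → ℝ) (d : Fin ℓ → ℝ)
    (hneg : ∑ i, c i * Real.exp (∑ j, a i j * y j) < 0) :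
    Tendsto (fun t : ℝ =>
        (∑ i, c i * Real.exp (∑ j, a i j * (t * shat j + y j))) +
        (∑ j, d j * Real.exp (∑ k, b j k * (t * shat k + y k))))
      atTop atBot := by
  set S : ℝ := ∑ k, s k * s k with hSdef
  have hS : 0 < S := by
    obtain ⟨k, hk⟩ := Function.ne_iff.mp hs
    exact Finset.sum_pos' (fun i _ => mul_self_nonneg _)
      ⟨k, Finset.mem_univ k, mul_self_pos.mpr hk⟩
  set K : ℝ := r * r / S with hKdef
  have hK : 0 < K := div_pos (mul_pos hr hr) hS
  have hashat : ∀ i, ∑ j, a i j * shat j = K := by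
    intro i
    rw [hshat]
    simp only [Pi.smul_apply, smul_eq_mul]
    have : ∑ j, a i j * (r / S * s j) = (r / S) * ∑ j, a i j * s j := by
      rw [Finset.mul_sum]; congr 1; ext j; ring
    rw [this, ha i, hKdef]; ring
  set β : Fin ℓ → ℝ := fun j => (r / S) * ∑ k, b j k * s k with hβdef
  have hbshat : ∀ j, ∑ k, b j k * shat k = β j := by
    intro j
    rw [hshat]
    simp only [Pi.smul_apply, smul_eq_mul]
    simp only [hβdef]
    rw [Finset.mul_sum]; congr 1; ext k; ring
  have hβlt : ∀ j, β j < K := by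
    intro j
    have := (mul_lt_mul_of_pos_left (hb j) (div_pos hr hS))
    calc β j < (r / S) * r := this
    _ = K := by rw [hKdef]; ring
  set C : ℝ := ∑ i, c i * Real.exp (∑ j, a i j * y j) with hCdef
  have key : ∀ t : ℝ,
      (∑ i, c i * Real.exp (∑ j, a i j * (t * shat j + y j))) +
        (∑ j, d j * Real.exp (∑ k, b j k * (t * shat k + y k))) =
      Real.exp (t * K) *
        (C + ∑ j, d j * Real.exp (t * (β j - K) + ∑ k, b j k * y k)) := by
    intro t
    rw [mul_add, hCdef, Finset.mul_sum, Finset.mul_sum]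
    congr 1
    · apply Finset.sum_congr rfl
      intro i _
      have h1 : ∑ j, a i j * (t * shat j + y j)
          = t * (∑ j, a i j * shat j) + ∑ j, a i j * y j := by
        rw [Finset.mul_sum, ← Finset.sum_add_distrib]
        apply Finset.sum_congr rfl; intro j _; ring
      rw [h1, hashat i, Real.exp_add]; ring
    · apply Finset.sum_congr rfl
      intro j _
      have h1 : ∑ k, b j k * (t * shat k + y k)
          = t * (∑ k, b j k * shat k) + ∑ k, b j k * y k := by
        rw [Finset.mul_sum, ← Finset.sum_add_distrib]
        apply Finset.sum_congr rfl; intro k _; ring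
      rw [h1, hbshat j,
        show t * β j + ∑ k, b j k * y k
          = t * K + (t * (β j - K) + ∑ k, b j k * y k) by ring,
        Real.exp_add]
      ring
  simp only [key]
  have h1 : Tendsto (fun t : ℝ => Real.exp (t * K)) atTop atTop :=
    Real.tendsto_exp_atTop.comp (tendsto_id.atTop_mul_const hK)
  have h2 : Tendsto (fun t : ℝ =>
      C + ∑ j, d j * Real.exp (t * (β j - K) + ∑ k, b j k * y k)) atTop (nhds (C + 0)) := by
    apply tendsto_const_nhds.add
    have : Tendsto (fun t : ℝ =>
        ∑ j, d j * Real.exp (t * (β j - K) + ∑ k, b j k * y k)) atTop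
        (nhds (∑ j : Fin ℓ, (0 : ℝ))) := by
      apply tendsto_finset_sum
      intro j _
      have hlin : Tendsto (fun t : ℝ => t * (β j - K) + ∑ k, b j k * y k) atTop atBot := by
        apply Filter.tendsto_atBot_add_const_right
        exact tendsto_id.atTop_mul_const_of_neg (sub_neg.mpr (hβlt j))
      have := (Real.tendsto_exp_atBot.comp hlin).const_mul (d j)
      simpa using this
    simpa using this
  rw [add_zero] at h2
  exact h1.atTop_mul_neg hneg h2
end
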